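/- Let f : ℝ^d → ℝ be differentiable with L-Lipschitz gradient, where L > 0. Let η > 0, G ≥ 0, ε ≥ 0. Let (θ_t) and (θ*_t) be sequences in ℝ^d with θ_0 = θ*_0, θ*_{t+1} = θ*_t − η·∇f(θ*_t), and θ_{t+1} = θ_t − η·(∇f(θ_t) + d_t + ξ_t), where ‖d_t‖₂ ≤ 2G and ‖ξ_t‖₂ ≤ ε for all t. Then for every t ≥ 0, ‖θ_t − θ*_t‖₂ ≤ η·(2G + ε)·((1 + ηL)^t − 1)/(ηL). -/

import Mathlib

open Finset

/- The deviation satisfies the linear recursion `u (t+1) ≤ (1 + ηL) u t + η(2G + ε)` from `u 0 = 0`: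
the gradient steps expand the deviation by at most `1 + ηL` (Lipschitz gradient) and the drift and
noise add at most `η(2G + ε)`. Unrolling gives `η(2G + ε)` times the geometric sum of `1 + ηL`,
whose closed form is the claimed bound. -/

theorem le_mul_geom_sum_of_le_mul_add {R : Type*} [CommSemiring R] [PartialOrder R]
    [IsOrderedRing R] {u : ℕ → R} {a b : R} (ha : 0 ≤ a) (hu₀ : u 0 ≤ 0)
    (hu : ∀ n, u (n + 1) ≤ a * u n + b) (n : ℕ) :
    u n ≤ b * ∑ i ∈ range n, a ^ i := by
  induction n with
  | zero => simpa using hu₀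
  | succ n ih =>
    calc u (n + 1) ≤ a * u n + b := hu n
      _ ≤ a * (b * ∑ i ∈ range n, a ^ i) + b := by gcongr
      _ = b * ∑ i ∈ range (n + 1), a ^ i := by rw [geom_sum_succ]; ring

theorem norm_perturbed_step_sub_step_le {E : Type*} [SeminormedAddCommGroup E]
    [NormedSpace ℝ E] {g : E → E} {L η δ : ℝ} {x y e : E}
    (hg : ‖g x - g y‖ ≤ L * ‖x - y‖) (hη : 0 ≤ η) (he : ‖e‖ ≤ δ) :
    ‖(x - η • (g x + e)) - (y - η • g y)‖ ≤ (1 + η * L) * ‖x - y‖ + η * δ := by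
  have hsplit : (x - η • (g x + e)) - (y - η • g y) = (x - y) - η • (g x - g y) - η • e := by
    simp only [smul_add, smul_sub]
    abel
  rw [hsplit]
  calc ‖(x - y) - η • (g x - g y) - η • e‖
      ≤ ‖x - y‖ + ‖η • (g x - g y)‖ + ‖η • e‖ :=
        (norm_sub_le _ _).trans (by gcongr; exact norm_sub_le _ _)
    _ = ‖x - y‖ + η * ‖g x - g y‖ + η * ‖e‖ := by
        rw [norm_smul, norm_smul, Real.norm_of_nonneg hη]
    _ ≤ ‖x - y‖ + η * (L * ‖x - y‖) + η * δ := by gcongr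
    _ = (1 + η * L) * ‖x - y‖ + η * δ := by ring

theorem sgd_deviation_unrolled_general {d : ℕ} (f : EuclideanSpace ℝ (Fin d) → ℝ)
    (L : ℝ) (hL : 0 < L)
    (hlip : ∀ x y, ‖gradient f x - gradient f y‖ ≤ L * ‖x - y‖)
    (η : ℝ) (hη : 0 < η)
    (G ε : ℝ)
    (θ θs dv ξ : ℕ → EuclideanSpace ℝ (Fin d))
    (h0 : θ 0 = θs 0)
    (hrefs : ∀ t, θs (t + 1) = θs t - η • gradient f (θs t))
    (hcl : ∀ t, θ (t + 1) = θ t - η • (gradient f (θ t) + dv t + ξ t))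
    (hd : ∀ t, ‖dv t‖ ≤ 2 * G) (hxi : ∀ t, ‖ξ t‖ ≤ ε) :
    ∀ t, ‖θ t - θs t‖ ≤ η * (2 * G + ε) * ((1 + η * L) ^ t - 1) / (η * L) := by
  have hηL : 0 < η * L := mul_pos hη hL
  have hstep (t : ℕ) : ‖θ (t + 1) - θs (t + 1)‖ ≤
      (1 + η * L) * ‖θ t - θs t‖ + η * (2 * G + ε) := by
    rw [hcl, hrefs, add_assoc]
    exact norm_perturbed_step_sub_step_le (hlip _ _) hη.le
      ((norm_add_le _ _).trans (add_le_add (hd t) (hxi t)))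
  intro t
  have hgeom := le_mul_geom_sum_of_le_mul_add (u := fun t ↦ ‖θ t - θs t‖)
    (by positivity) (by simp [h0]) hstep t
  rwa [geom_sum_eq (by linarith), add_sub_cancel_left, ← mul_div_assoc] at hgeom

/-- Exact unrolled deviation bound for SGD with drift and noise. -/
theorem sgd_deviation_unrolled {d : ℕ} (f : EuclideanSpace ℝ (Fin d) → ℝ)
    (L : ℝ) (hL : 0 < L) (hf : Differentiable ℝ f)
    (hlip : ∀ x y, ‖gradient f x - gradient f y‖ ≤ L * ‖x - y‖)
    (η : ℝ) (hη : 0 < η)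
    (G ε : ℝ) (hG : 0 ≤ G) (hε : 0 ≤ ε)
    (θ θs dv ξ : ℕ → EuclideanSpace ℝ (Fin d))
    (h0 : θ 0 = θs 0)
    (hrefs : ∀ t, θs (t + 1) = θs t - η • gradient f (θs t))
    (hcl : ∀ t, θ (t + 1) = θ t - η • (gradient f (θ t) + dv t + ξ t))
    (hd : ∀ t, ‖dv t‖ ≤ 2 * G) (hxi : ∀ t, ‖ξ t‖ ≤ ε) :
    ∀ t, ‖θ t - θs t‖ ≤ η * (2 * G + ε) * ((1 + η * L) ^ t - 1) / (η * L) :=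
  sgd_deviation_unrolled_general f L hL hlip η hη G ε θ θs dv ξ h0 hrefs hcl hd hxi
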